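/- If X is a regular simplicial set and U is any simplicial set, then the internal hom Hom(U, X) is regular. -/

import Mathlib

open CategoryTheory Simplicial MonoidalCategory SSet Limits

universe u v

/-- A simplex is degenerate if it is the image of a degeneracy map. -/
def SDeg (X : SSet.{u}) : ∀ {n : ℕ}, X _⦋n⦌ → Prop
| 0, _ => False
| n + 1, x => ∃ (i : Fin (n + 1)) (y : X _⦋n⦌), x = X.map (SimplexCategory.σ i).op y

/-- The `i`-th elementary edge `X(φ(i,i+1))(x)` of a `p`-simplex `x`. -/
def elemEdge (X : SSet.{u}) {p : ℕ} (x : X _⦋p⦌) (i : Fin p) : X _⦋1⦌ :=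
  X.map (SimplexCategory.mkOfLe i.castSucc i.succ (Fin.castSucc_lt_succ (i := i)).le).op x

/-- A simplicial set is regular (property `P_1`) if any simplex with a degenerate
`i`-th elementary edge is an `i`-th degeneracy. -/
def SReg (X : SSet.{u}) : Prop :=
  ∀ (p : ℕ) (x : X _⦋p + 1⦌) (i : Fin (p + 1)),
    SDeg X (elemEdge X x i) → ∃ y : X _⦋p⦌, x = X.map (SimplexCategory.σ i).op y

/-- The internal hom of simplicial sets: its `p`-simplices are the
simplicial maps `Δ[p] ⊗ U ⟶ X`. -/
noncomputable def sHom (U X : SSet.{u}) : SSet.{u} where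
  obj m := stdSimplex.obj m.unop ⊗ U ⟶ X
  map φ := TypeCat.ofHom fun f => (SSet.stdSimplex.map φ.unop ▷ U) ≫ f
  map_id m := by ext f : 3; simp [(SSet.stdSimplex).map_id]
  map_comp φ ψ := by ext f : 3; simp [(SSet.stdSimplex).map_comp]

/-!
A `p`-simplex `f : Δ[p] ⊗ U ⟶ X` of `Hom(U, X)` is the `i`-th degeneracy of its `(i+1)`-st face as
soon as `f(α, u) = f(α ≫ σᵢ ≫ δᵢ₊₁, u)` for every simplex `(α, u)`, i.e. as soon as `f` does not
see the difference between the vertices `i` and `i+1` of `Δ[p]`. We lower the values `i+1` of `α`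
to `i` one at a time, starting with the first one, at position `j`. Inserting the vertex `i` before
position `j` of `α` gives an `(m+1)`-simplex `β` of `Δ[p]`, and the `j`-th edge of `f(β, sⱼ u)` is
`f(edge (i, i+1), degenerate edge)`, which is degenerate. By regularity of `X` the faces `dⱼ` and
`dⱼ₊₁` of `f(β, sⱼ u)` agree; they are `f(α, u)` and `f(α', u)`, where `α'` is `α` with its value at
`j` lowered to `i`.
-/

namespace Fin

lemma insertNth_castSucc_monotone {n : ℕ} {α : Type*} [Preorder α] {f : Fin (n + 1) → α}
    (hf : Monotone f) (j : Fin (n + 1)) (x : α) (h₁ : ∀ k < j, f k ≤ x) (h₂ : x ≤ f j) :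
    Monotone (Fin.insertNth j.castSucc (α := fun _ ↦ α) x f) := by
  induction j using Fin.cases with
  | zero => exact insertNth_zero_monotone hf x h₂
  | succ j =>
    rw [← succ_castSucc]
    exact insertNth_monotone hf j x (h₁ _ j.castSucc_lt_succ) h₂

lemma succ_succAbove_of_ne {n : ℕ} {j k : Fin (n + 1)} (h : k ≠ j) :
    j.succ.succAbove k = j.castSucc.succAbove k := by
  rcases lt_or_gt_of_ne h with h | h
  · rw [succAbove_succ_of_le _ _ h.le, succAbove_castSucc_of_lt _ _ h]
  · rw [succAbove_succ_of_lt _ _ h, succAbove_castSucc_of_le _ _ h.le]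

end Fin

open Finset in
lemma card_filter_update_lt {ι β : Type*} [Fintype ι] [DecidableEq ι] [DecidableEq β]
    {g : ι → β} {j : ι} {b x : β} (hj : g j = b) (hx : x ≠ b) :
    #{k | Function.update g j x k = b} < #{k | g k = b} := by
  refine card_lt_card ⟨fun k hk ↦ ?_, fun hsub ↦ ?_⟩
  · simp only [mem_filter, mem_univ, true_and] at hk ⊢
    rcases eq_or_ne k j with rfl | hkj
    · simp_all
    · rwa [Function.update_of_ne hkj] at hk
  · simpa [hj, hx] using hsub (mem_filter.mpr ⟨mem_univ j, hj⟩)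

namespace SimplexCategory

lemma σ_comp_δ_succ_apply {n : ℕ} (i : Fin (n + 1)) (b : Fin (n + 2)) :
    (σ i ≫ δ i.succ).toOrderHom b = if b = i.succ then i.castSucc else b := by
  split_ifs with hb
  · subst hb
    simp [σ, δ]
  · simp [σ, δ, hb]

lemma comp_σ_comp_δ_succ_of_forall_ne {m n : ℕ} (i : Fin (n + 1)) (α : ⦋m⦌ ⟶ ⦋n + 1⦌)
    (h : ∀ k, α.toOrderHom k ≠ i.succ) : α ≫ σ i ≫ δ i.succ = α := by
  ext k : 3
  exact (σ_comp_δ_succ_apply i _).trans (if_neg (h k))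

lemma mkOfSucc_comp_σ_self {m : ℕ} (j : Fin (m + 1)) :
    mkOfSucc j ≫ σ j = σ 0 ≫ const ⦋0⦌ ⦋m⦌ j :=
  Hom.ext_one_left _ _ (Fin.predAbove_castSucc_self j) (Fin.predAbove_succ_self j)

variable {m n : ℕ} (α : ⦋m⦌ ⟶ ⦋n⦌) (j : Fin (m + 1)) (x : Fin (n + 1))
  (h₁ : ∀ k < j, α.toOrderHom k ≤ x) (h₂ : x ≤ α.toOrderHom j)

def insertAt : ⦋m + 1⦌ ⟶ ⦋n⦌ :=
  mkHom ⟨Fin.insertNth j.castSucc x α.toOrderHom,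
    Fin.insertNth_castSucc_monotone α.toOrderHom.monotone j x h₁ h₂⟩

lemma insertAt_apply (k : Fin (m + 2)) :
    (insertAt α j x h₁ h₂).toOrderHom k =
      Fin.insertNth (α := fun _ ↦ Fin (n + 1)) j.castSucc x α.toOrderHom k :=
  rfl

lemma δ_castSucc_comp_insertAt : δ j.castSucc ≫ insertAt α j x h₁ h₂ = α := by
  ext k : 3
  change (insertAt α j x h₁ h₂).toOrderHom (j.castSucc.succAbove k) = _
  rw [insertAt_apply, Fin.insertNth_apply_succAbove]

lemma mkOfSucc_comp_insertAt : mkOfSucc j ≫ insertAt α j x h₁ h₂ = mkOfLe x _ h₂ := by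
  ext k : 3
  fin_cases k
  · change (insertAt α j x h₁ h₂).toOrderHom j.castSucc = x
    rw [insertAt_apply, Fin.insertNth_apply_same]
  · change (insertAt α j x h₁ h₂).toOrderHom j.succ = α.toOrderHom j
    rw [insertAt_apply, ← Fin.succAbove_castSucc_self, Fin.insertNth_apply_succAbove]

lemma δ_succ_comp_insertAt :
    ⇑(δ j.succ ≫ insertAt α j x h₁ h₂).toOrderHom = Function.update (⇑α.toOrderHom) j x := by
  ext1 k
  change (insertAt α j x h₁ h₂).toOrderHom (j.succ.succAbove k) = _
  rw [insertAt_apply]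
  by_cases hk : k = j
  · rw [hk, Fin.succAbove_succ_self, Fin.insertNth_apply_same, Function.update_self]
  · rw [Fin.succ_succAbove_of_ne hk, Fin.insertNth_apply_succAbove, Function.update_of_ne hk]

end SimplexCategory

open SimplexCategory

lemma SReg.map_δ_castSucc_eq_map_δ_succ {X : SSet.{u}} (hX : SReg X) {p : ℕ} {x : X _⦋p + 1⦌}
    {j : Fin (p + 1)} (h : SDeg X (elemEdge X x j)) :
    X.map (δ j.castSucc).op x = X.map (δ j.succ).op x := by
  obtain ⟨y, rfl⟩ := hX p x j h
  simp only [← Functor.map_comp_apply, ← op_comp, δ_comp_σ_self, δ_comp_σ_succ]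

namespace SSet

variable {U X : SSet.{u}} {n : ℕ}

lemma map_app_objEquiv_symm (f : Δ[n] ⊗ U ⟶ X) {m m' : ℕ} (g : ⦋m'⦌ ⟶ ⦋m⦌) (α : ⦋m⦌ ⟶ ⦋n⦌)
    (u : U _⦋m⦌) :
    X.map g.op (f.app _ (stdSimplex.objEquiv.symm α, u)) =
      f.app _ (stdSimplex.objEquiv.symm (g ≫ α), U.map g.op u) :=
  (NatTrans.naturality_apply f g.op _).symm

lemma exists_app_eq_app_update (hX : SReg X) (f : Δ[n] ⊗ U ⟶ X) {x y : Fin (n + 1)}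
    (hxy : x ≤ y)
    (hdeg : ∀ w : U _⦋0⦌,
      SDeg X (f.app _ (stdSimplex.objEquiv.symm (mkOfLe x y hxy), U.map (σ 0).op w)))
    {m : ℕ} (α : ⦋m⦌ ⟶ ⦋n⦌) (u : U _⦋m⦌) (j : Fin (m + 1)) (hj : α.toOrderHom j = y)
    (hlt : ∀ k < j, α.toOrderHom k ≤ x) :
    ∃ α' : ⦋m⦌ ⟶ ⦋n⦌, ⇑α'.toOrderHom = Function.update (⇑α.toOrderHom) j x ∧
      f.app _ (stdSimplex.objEquiv.symm α, u) = f.app _ (stdSimplex.objEquiv.symm α', u) := by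
  subst hj
  set β := insertAt α j x hlt hxy
  set z := f.app _ (stdSimplex.objEquiv.symm β, U.map (σ j).op u)
  have hz : SDeg X (elemEdge X z j) := by
    change SDeg X (X.map (mkOfSucc j).op z)
    rw [map_app_objEquiv_symm, mkOfSucc_comp_insertAt, ← Functor.map_comp_apply, ← op_comp,
      mkOfSucc_comp_σ_self, op_comp, Functor.map_comp_apply]
    exact hdeg _
  refine ⟨δ j.succ ≫ β, δ_succ_comp_insertAt α j x hlt hxy, ?_⟩
  have := hX.map_δ_castSucc_eq_map_δ_succ hz
  rwa [map_app_objEquiv_symm, map_app_objEquiv_symm, δ_castSucc_comp_insertAt,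
    ← Functor.map_comp_apply, ← Functor.map_comp_apply, ← op_comp, ← op_comp, δ_comp_σ_self,
    δ_comp_σ_succ, op_id, Functor.map_id_apply] at this

open Finset in
lemma app_eq_app_comp_σ_comp_δ_succ (hX : SReg X) (f : Δ[n + 1] ⊗ U ⟶ X) (i : Fin (n + 1))
    (hedge : ∀ w : U _⦋0⦌,
      SDeg X (f.app _ (stdSimplex.objEquiv.symm (mkOfSucc i), U.map (σ 0).op w)))
    {m : ℕ} (α : ⦋m⦌ ⟶ ⦋n + 1⦌) (u : U _⦋m⦌) :
    f.app _ (stdSimplex.objEquiv.symm α, u) =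
      f.app _ (stdSimplex.objEquiv.symm (α ≫ σ i ≫ δ i.succ), u) := by
  induction hc : #{k | α.toOrderHom k = i.succ} using Nat.strong_induction_on generalizing α with
  | _ c ih =>
  by_cases hfib : ∃ k, α.toOrderHom k = i.succ
  swap
  · push Not at hfib
    rw [comp_σ_comp_δ_succ_of_forall_ne i α hfib]
  obtain ⟨j, hj, hmin⟩ := wellFounded_lt.has_min {k | α.toOrderHom k = i.succ} hfib
  have hlt : ∀ k < j, α.toOrderHom k ≤ i.castSucc := fun k hk ↦
    Fin.le_castSucc_iff.mpr ((hj ▸ α.toOrderHom.monotone hk.le).lt_of_ne fun he ↦ hmin k he hk)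
  obtain ⟨α', hα', heq⟩ := exists_app_eq_app_update hX f i.castSucc_le_succ hedge α u j hj hlt
  have hcollapse : α' ≫ σ i ≫ δ i.succ = α ≫ σ i ≫ δ i.succ := by
    ext k : 3
    change (σ i ≫ δ i.succ).toOrderHom (α'.toOrderHom k) =
      (σ i ≫ δ i.succ).toOrderHom (α.toOrderHom k)
    rw [hα']
    rcases eq_or_ne k j with rfl | hkj
    · rw [Function.update_self, hj, σ_comp_δ_succ_apply, σ_comp_δ_succ_apply, if_pos rfl,
        if_neg Fin.castSucc_lt_succ.ne]
    · rw [Function.update_of_ne hkj]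
  have hcard : #{k | α'.toOrderHom k = i.succ} < c := by
    rw [← hc, hα']
    exact card_filter_update_lt hj Fin.castSucc_lt_succ.ne
  rw [heq, ih _ hcard α' rfl, hcollapse]

end SSet

/-- If `X` is regular then the internal hom `Hom(U, X)` is regular for every `U`. -/
theorem stmt_18 (X : SSet.{u}) (hX : SReg X) (U : SSet.{u}) : SReg (sHom U X) := by
  rintro p f i ⟨ι, h, hfh⟩
  obtain rfl := Fin.fin_one_eq_zero ι
  have hedge (w : U _⦋0⦌) :
      SDeg X (f.app _ (SSet.stdSimplex.objEquiv.symm (mkOfSucc i), U.map (σ 0).op w)) :=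
    ⟨0, h.app _ (SSet.stdSimplex.objEquiv.symm (𝟙 _), w),
      (congrArg (fun g ↦ g.app _ (SSet.stdSimplex.objEquiv.symm (𝟙 _), U.map (σ 0).op w)) hfh).trans
        (map_app_objEquiv_symm h (σ 0) (𝟙 _) w).symm⟩
  refine ⟨SSet.stdSimplex.map (δ i.succ) ▷ U ≫ f, ?_⟩
  refine SSet.hom_ext fun ⟨m⟩ ↦ ?_
  ext ⟨a, u⟩
  induction m using SimplexCategory.rec
  exact app_eq_app_comp_σ_comp_δ_succ hX f i hedge (SSet.stdSimplex.objEquiv a) u
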